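/- Let λ > 0 and let R : ℝ → Matrix (Fin 3) (Fin 3) ℝ be differentiable with R(t) ∈ SO(3) (i.e., R(t)ᵀ R(t) = 1 and det R(t) = 1) for all t, satisfying the error kinematics R'(t) = R(t) · [ω̆(t)]× with the sliding feedback ω̆(t) = −λ · (𝒫(R(t)))∨, where 𝒫(A) = (1/2)(A − Aᵀ) and (·)∨ is the inverse of [·]×. Then V_R(t) = trace(3·1 − R(t)) is differentiable with V_R'(t) = −2λ · ‖(𝒫(R(t)))∨‖² ≤ 0. -/

import Mathlib

noncomputable section

open Matrix

/-- The skew-symmetric matrix `[u]×` with `[u]× w = u × w`. -/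
def skewMat (u : Fin 3 → ℝ) : Matrix (Fin 3) (Fin 3) ℝ :=
  !![0, -u 2, u 1; u 2, 0, -u 0; -u 1, u 0, 0]

/-- The skew-symmetric part `𝒫(A) = (1/2)(A - Aᵀ)` of a matrix. -/
def skewPart (A : Matrix (Fin 3) (Fin 3) ℝ) : Matrix (Fin 3) (Fin 3) ℝ :=
  (1 / 2 : ℝ) • (A - Aᵀ)

/-- The vee map `(·)∨`, inverse of `[·]×`, valued in Euclidean `ℝ³`. -/
def vee (A : Matrix (Fin 3) (Fin 3) ℝ) : EuclideanSpace ℝ (Fin 3) :=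
  WithLp.toLp 2 ![A 2 1, A 0 2, A 1 0]

/-! Along `R' = R [ω]×` the Lyapunov function `trace (3 - R)` has derivative `-trace (R [ω]×)`,
and `trace (A [u]×) = -2 ⟪𝒫(A)∨, u⟫` for every matrix `A`. With the feedback `ω = -λ 𝒫(R)∨`
this is `-2λ ‖𝒫(R)∨‖²`. -/

theorem Matrix.hasDerivAt_trace {n 𝕜 : Type*} [Fintype n] [NontriviallyNormedField 𝕜]
    {f : 𝕜 → Matrix n n 𝕜} {f' : Matrix n n 𝕜} {t : 𝕜}
    (h : ∀ i, HasDerivAt (fun τ => f τ i i) (f' i i) t) :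
    HasDerivAt (fun τ => (f τ).trace) f'.trace t :=
  HasDerivAt.fun_sum fun i _ => h i

theorem trace_mul_skewMat (A : Matrix (Fin 3) (Fin 3) ℝ) (u : Fin 3 → ℝ) :
    (A * skewMat u).trace = -2 * inner ℝ (vee (skewPart A)) (WithLp.toLp 2 u) := by
  simp only [trace, diag, mul_apply, Fin.sum_univ_three, skewMat, vee, skewPart,
    PiLp.inner_apply, RCLike.inner_apply, Real.ringHom_apply, of_apply, cons_val', cons_val_zero,
    cons_val_one, cons_val, cons_val_fin_one, Matrix.smul_apply, Matrix.sub_apply,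
    transpose_apply, smul_eq_mul]
  ring

theorem trace_mul_skewMat_neg_smul_vee_skewPart (A : Matrix (Fin 3) (Fin 3) ℝ) (lam : ℝ) :
    (A * skewMat ((-lam) • vee (skewPart A))).trace = 2 * lam * ‖vee (skewPart A)‖ ^ 2 := by
  rw [trace_mul_skewMat, ← WithLp.ofLp_smul, WithLp.toLp_ofLp, inner_smul_right,
    real_inner_self_eq_norm_sq]
  ring

theorem SO3_sliding_lyapunov_nonincreasing_general
    (lam : ℝ) (hlam : 0 < lam)
    (R : ℝ → Matrix (Fin 3) (Fin 3) ℝ)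
    (hdyn : ∀ t : ℝ, ∀ i j, HasDerivAt (fun τ => R τ i j)
      ((R t * skewMat ((-lam) • vee (skewPart (R t)))) i j) t) :
    ∀ t : ℝ,
      HasDerivAt (fun τ => Matrix.trace ((3 : ℝ) • (1 : Matrix (Fin 3) (Fin 3) ℝ) - R τ))
        (-(2 * lam * ‖vee (skewPart (R t))‖ ^ 2)) t ∧
      -(2 * lam * ‖vee (skewPart (R t))‖ ^ 2) ≤ 0 := by
  intro t
  have hV : HasDerivAt (fun τ => ((3 : ℝ) • (1 : Matrix (Fin 3) (Fin 3) ℝ) - R τ).trace)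
      (0 - (R t * skewMat ((-lam) • vee (skewPart (R t)))).trace) t := by
    simp only [trace_sub]
    exact (hasDerivAt_const t _).sub (Matrix.hasDerivAt_trace fun i => hdyn t i i)
  rw [trace_mul_skewMat_neg_smul_vee_skewPart, zero_sub] at hV
  exact ⟨hV, neg_nonpos.mpr (by positivity)⟩

theorem SO3_sliding_lyapunov_nonincreasing
    (lam : ℝ) (hlam : 0 < lam)
    (R : ℝ → Matrix (Fin 3) (Fin 3) ℝ)
    (hSO : ∀ t : ℝ, (R t)ᵀ * R t = 1 ∧ (R t).det = 1)
    (hdyn : ∀ t : ℝ, ∀ i j, HasDerivAt (fun τ => R τ i j)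
      ((R t * skewMat ((-lam) • vee (skewPart (R t)))) i j) t) :
    ∀ t : ℝ,
      HasDerivAt (fun τ => Matrix.trace ((3 : ℝ) • (1 : Matrix (Fin 3) (Fin 3) ℝ) - R τ))
        (-(2 * lam * ‖vee (skewPart (R t))‖ ^ 2)) t ∧
      -(2 * lam * ‖vee (skewPart (R t))‖ ^ 2) ≤ 0 :=
  SO3_sliding_lyapunov_nonincreasing_general lam hlam R hdyn
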